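/- Let A be a real symmetric positive-definite (NM)×(NM) matrix with λ_min(A) = μ > 0, indexed by a partition of {1,...,NM} into N consecutive blocks of size M, and let B be the block-diagonal part of A. Let y ∈ ℝ^{NM} and let F : ℝ → ℝ^{NM} be differentiable with F'(t) = -½(A + B)(F(t) - y) for all t ≥ 0. Then for all t ≥ 0, ‖F(t) - y‖² ≤ e^{-2μt} ‖F(0) - y‖². (This combines the eigenvalue comparison λ_min(½(A+B)) ≥ λ_min(A) with the exponential-decay lemma: the Fed-CO₂ dynamics, driven by ½(V_on^∞ + V_off^∞), converge at least at the rate governed by λ_min(V_on^∞) of FedBN.) -/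

import Mathlib

/-- The smallest eigenvalue of a real symmetric (Hermitian) matrix. -/
noncomputable def minEig {n : Type*} [Fintype n] [DecidableEq n]
    {A : Matrix n n ℝ} (hA : A.IsHermitian) : ℝ :=
  ⨅ i, hA.eigenvalues i

/-!
Writing `x_k` for the restriction of `x` to the `k`-th block, the block-diagonal part `B` of `A`
has the quadratic form `xᵀBx = ∑ₖ x_kᵀAx_k`, so the Rayleigh bound `μ‖x‖² ≤ xᵀAx` passes from
`A` to `B`, hence to `C = ½(A + B)`. Along the flow, `d/dt ‖F - y‖² = -2⟪F - y, C(F - y)⟫ ≤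
-2μ‖F - y‖²`, and Grönwall's inequality gives the exponential decay.
-/

open scoped Matrix InnerProductSpace
open Real

namespace Matrix

section Block

variable {n κ R : Type*} [Fintype n] [Fintype κ] [DecidableEq κ] [CommSemiring R]

def blockDiagPart (blk : n → κ) (A : Matrix n n R) : Matrix n n R :=
  of fun p q => if blk p = blk q then A p q else 0

def restrictToBlock (blk : n → κ) (k : κ) (x : n → R) : n → R :=
  fun p => if blk p = k then x p else 0

theorem dotProduct_blockDiagPart_mulVec (blk : n → κ) (A : Matrix n n R) (x : n → R) :
    x ⬝ᵥ (blockDiagPart blk A *ᵥ x) =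
      ∑ k, restrictToBlock blk k x ⬝ᵥ (A *ᵥ restrictToBlock blk k x) := by
  simp only [dotProduct, mulVec, Finset.mul_sum]
  conv_rhs => rw [Finset.sum_comm]
  refine Finset.sum_congr rfl fun p _ => ?_
  conv_rhs => rw [Finset.sum_comm]
  refine Finset.sum_congr rfl fun q _ => ?_
  simp [blockDiagPart, restrictToBlock, ite_mul, mul_ite, eq_comm]

theorem sum_dotProduct_restrictToBlock (blk : n → κ) (x : n → R) :
    ∑ k, restrictToBlock blk k x ⬝ᵥ restrictToBlock blk k x = x ⬝ᵥ x := by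
  simp only [dotProduct, restrictToBlock]
  rw [Finset.sum_comm]
  simp [ite_mul, mul_ite]

theorem mul_dotProduct_self_le_blockDiagPart [PartialOrder R] [IsOrderedAddMonoid R]
    {A : Matrix n n R} {μ : R} (hA : ∀ x, μ * (x ⬝ᵥ x) ≤ x ⬝ᵥ (A *ᵥ x)) (blk : n → κ)
    (x : n → R) : μ * (x ⬝ᵥ x) ≤ x ⬝ᵥ (blockDiagPart blk A *ᵥ x) := by
  rw [dotProduct_blockDiagPart_mulVec, ← sum_dotProduct_restrictToBlock blk, Finset.mul_sum]
  exact Finset.sum_le_sum fun k _ => hA _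

end Block

variable {n : Type*} [Fintype n] [DecidableEq n]

theorem IsHermitian.minEig_le_eigenvalues {S : Matrix n n ℝ} (hS : S.IsHermitian) (i : n) :
    minEig hS ≤ hS.eigenvalues i :=
  ciInf_le (Finite.bddBelow_range _) i

theorem IsHermitian.posSemidef_sub_algebraMap {S : Matrix n n ℝ} (hS : S.IsHermitian) {μ : ℝ}
    (hμ : ∀ i, μ ≤ hS.eigenvalues i) : (S - algebraMap ℝ _ μ).PosSemidef := by
  refine posSemidef_iff_isHermitian_and_spectrum_nonneg.mpr
    ⟨hS.sub (IsSelfAdjoint.algebraMap _ (.all μ)), ?_⟩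
  rw [← spectrum.sub_singleton_eq, hS.spectrum_real_eq_range_eigenvalues]
  rintro _ ⟨_, ⟨i, rfl⟩, _, rfl, rfl⟩
  exact sub_nonneg.mpr (hμ i)

theorem IsHermitian.minEig_mul_dotProduct_self_le {S : Matrix n n ℝ} (hS : S.IsHermitian)
    (x : n → ℝ) : minEig hS * (x ⬝ᵥ x) ≤ x ⬝ᵥ (S *ᵥ x) := by
  have := (hS.posSemidef_sub_algebraMap hS.minEig_le_eigenvalues).dotProduct_mulVec_nonneg x
  simpa [sub_mulVec, Algebra.algebraMap_eq_smul_one, smul_mulVec, dotProduct_smul] using this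

theorem mul_norm_sq_le_inner_toEuclideanLin {S : Matrix n n ℝ} {μ : ℝ}
    (hS : ∀ x, μ * (x ⬝ᵥ x) ≤ x ⬝ᵥ (S *ᵥ x))
    (v : EuclideanSpace ℝ n) : μ * ‖v‖ ^ 2 ≤ ⟪v, toEuclideanLin S v⟫_ℝ := by
  have hquad : ⟪v, toEuclideanLin S v⟫_ℝ = v.ofLp ⬝ᵥ (S *ᵥ v.ofLp) := dotProduct_comm _ _
  rw [hquad, ← real_inner_self_eq_norm_sq]
  exact hS v.ofLp

end Matrix

theorem norm_sq_le_exp_mul_norm_sq_of_inner_deriv_le {E : Type*} [NormedAddCommGroup E]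
    [InnerProductSpace ℝ E] {X X' : ℝ → E} {μ : ℝ}
    (hX : ∀ t, 0 ≤ t → HasDerivAt X (X' t) t)
    (hdiss : ∀ t, 0 ≤ t → ⟪X t, X' t⟫_ℝ ≤ -μ * ‖X t‖ ^ 2) :
    ∀ t, 0 ≤ t → ‖X t‖ ^ 2 ≤ exp (-2 * μ * t) * ‖X 0‖ ^ 2 := by
  intro t ht
  have hsq : ∀ s, 0 ≤ s → HasDerivAt (‖X ·‖ ^ 2) (2 * ⟪X s, X' s⟫_ℝ) s :=
    fun s hs => (hX s hs).norm_sq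
  have := le_gronwallBound_of_liminf_deriv_right_le (a := 0) (b := t) (K := -2 * μ) (ε := 0)
    (fun s hs => (hsq s hs.1).continuousAt.continuousWithinAt)
    (fun s hs _ hr => (hsq s hs.1).hasDerivWithinAt.liminf_right_slope_le hr) le_rfl
    (fun s hs => by linarith [hdiss s hs.1]) t ⟨ht, le_rfl⟩
  rwa [gronwallBound_ε0, sub_zero, mul_comm] at this

theorem fedco2_dynamics_exponential_decay_general
    (N M : ℕ)
    (A B : Matrix (Fin N × Fin M) (Fin N × Fin M) ℝ)
    (hA : A.PosDef)
    (μ : ℝ) (hμ : μ = minEig hA.1)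
    (hB : ∀ p q : Fin N × Fin M,
      B p q = if p.1 = q.1 then A p q else 0)
    (y : EuclideanSpace ℝ (Fin N × Fin M))
    (F : ℝ → EuclideanSpace ℝ (Fin N × Fin M))
    (hderiv : ∀ t : ℝ, 0 ≤ t →
      HasDerivAt F
        (-(Matrix.toEuclideanLin ((1 / 2 : ℝ) • (A + B)) (F t - y))) t) :
    ∀ t : ℝ, 0 ≤ t →
      ‖F t - y‖ ^ 2 ≤ Real.exp (-2 * μ * t) * ‖F 0 - y‖ ^ 2 := by
  have hAμ : ∀ x, μ * (x ⬝ᵥ x) ≤ x ⬝ᵥ (A *ᵥ x) := hμ ▸ hA.1.minEig_mul_dotProduct_self_le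
  have hB_eq : B = Matrix.blockDiagPart Prod.fst A := by ext p q; exact hB p q
  have hBμ : ∀ x, μ * (x ⬝ᵥ x) ≤ x ⬝ᵥ (B *ᵥ x) :=
    hB_eq ▸ Matrix.mul_dotProduct_self_le_blockDiagPart hAμ Prod.fst
  have hCμ : ∀ x, μ * (x ⬝ᵥ x) ≤ x ⬝ᵥ (((1 / 2 : ℝ) • (A + B)) *ᵥ x) := fun x => by
    simp only [Matrix.smul_mulVec, Matrix.add_mulVec, dotProduct_smul, dotProduct_add,
      smul_eq_mul]
    linarith [hAμ x, hBμ x]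
  refine norm_sq_le_exp_mul_norm_sq_of_inner_deriv_le (fun t ht => (hderiv t ht).sub_const y)
    fun t _ => ?_
  rw [inner_neg_right, neg_mul, neg_le_neg_iff]
  exact Matrix.mul_norm_sq_le_inner_toEuclideanLin hCμ _

/-- Let `A` be a real symmetric positive-definite (NM)×(NM) matrix with
smallest eigenvalue `μ > 0`, and let `B` be the block-diagonal part of `A`.
If `F' t = -½(A + B)(F t - y)` for all `t ≥ 0`, then
`‖F t - y‖² ≤ exp (-2 μ t) ‖F 0 - y‖²` for all `t ≥ 0`. -/
theorem fedco2_dynamics_exponential_decay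
    (N M : ℕ) (hN : 0 < N) (hM : 0 < M)
    (A B : Matrix (Fin N × Fin M) (Fin N × Fin M) ℝ)
    (hA : A.PosDef)
    (μ : ℝ) (hμ : μ = minEig hA.1) (hμpos : 0 < μ)
    (hB : ∀ p q : Fin N × Fin M,
      B p q = if p.1 = q.1 then A p q else 0)
    (y : EuclideanSpace ℝ (Fin N × Fin M))
    (F : ℝ → EuclideanSpace ℝ (Fin N × Fin M))
    (hF : Differentiable ℝ F)
    (hderiv : ∀ t : ℝ, 0 ≤ t →
      HasDerivAt F
        (-(Matrix.toEuclideanLin ((1 / 2 : ℝ) • (A + B)) (F t - y))) t) :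
    ∀ t : ℝ, 0 ≤ t →
      ‖F t - y‖ ^ 2 ≤ Real.exp (-2 * μ * t) * ‖F 0 - y‖ ^ 2 :=
  fedco2_dynamics_exponential_decay_general N M A B hA μ hμ hB y F hderiv
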